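/- There exists a (3g,3,4,1)-CDF for every positive integer g all of whose prime factors are congruent to 1 modulo 4. -/

import Mathlib

/-- The multiset of differences `f - f'` (with `f ≠ f'`) from a finset `F`. -/
def blockDiffs {G : Type*} [AddGroup G] [DecidableEq G] (F : Finset G) : Multiset G :=
  ((F ×ˢ F).filter fun p => p.1 ≠ p.2).val.map fun p => p.1 - p.2

/-- A `(gh,h,k,1)`-CDF (cyclic relative difference family): a family `𝓕` of
`k`-element subsets of `Z_{gh}` (base blocks, possibly with repetitions) such that
the multiset of differences from all base blocks contains every element of
`Z_{gh}` outside the subgroup `H = g·Z_{gh}` (of order `h`) exactly once and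
contains no element of `H`. -/
def IsCDF (g h k : ℕ) (𝓕 : Multiset (Finset (ZMod (g * h)))) : Prop :=
  (∀ F ∈ 𝓕, F.card = k) ∧
  (∀ x : ZMod (g * h), x ∈ AddSubgroup.zmultiples ((g : ZMod (g * h))) →
    (𝓕.bind blockDiffs).count x = 0) ∧
  (∀ x : ZMod (g * h), x ∉ AddSubgroup.zmultiples ((g : ZMod (g * h))) →
    (𝓕.bind blockDiffs).count x = 1)

/-! The Chinese remainder theorem identifies `ℤ/3gℤ` with `ℤ/gℤ × ℤ/3ℤ`, the subgroup `g·ℤ/3gℤ`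
becoming `0 × ℤ/3ℤ`. As every prime factor of `g` is `1 mod 4`, `-1` has a square root `i` in
`ℤ/gℤ` (Hensel lifting at each prime power), and `2`, `1 + i`, `1 - i` are units. The block
`{(x, 0), (x i, 0), (x (1 + i), 1), (0, 1)}` has as differences the `⟨i⟩`-orbit of `x (1 - i)` on
level `0` and the `⟨i⟩`-orbit of `x` on each of the levels `±1`. Multiplication by `⟨i⟩` is free on
the nonzero elements of `ℤ/gℤ`, so letting `x` run over a set of orbit representatives covers
every element off `0 × ℤ/3ℤ`, and exactly once since both sides have `12` elements per orbit. -/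

open Finset

section BlockDiffs

variable {G : Type*} [AddGroup G] [DecidableEq G]

lemma mem_blockDiffs {F : Finset G} {y : G} :
    y ∈ blockDiffs F ↔ ∃ a ∈ F, ∃ b ∈ F, a ≠ b ∧ a - b = y := by
  simp [blockDiffs, and_assoc]

lemma sub_mem_blockDiffs {F : Finset G} {a b : G} (ha : a ∈ F) (hb : b ∈ F) (hab : a ≠ b) :
    a - b ∈ blockDiffs F :=
  mem_blockDiffs.2 ⟨a, ha, b, hb, hab, rfl⟩

lemma neg_mem_blockDiffs {F : Finset G} {y : G} (hy : y ∈ blockDiffs F) :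
    -y ∈ blockDiffs F := by
  obtain ⟨a, ha, b, hb, hab, rfl⟩ := mem_blockDiffs.1 hy
  rw [neg_sub]
  exact sub_mem_blockDiffs hb ha hab.symm

lemma card_blockDiffs (F : Finset G) : Multiset.card (blockDiffs F) = #F * #F - #F := by
  have : (F ×ˢ F).filter (fun p => p.1 ≠ p.2) = F.offDiag := by
    ext; simp [mem_offDiag, and_assoc]
  rw [blockDiffs, Multiset.card_map, this]
  exact offDiag_card F

lemma blockDiffs_map {H : Type*} [AddGroup H] [DecidableEq H] (e : G ≃+ H) (F : Finset G) :
    blockDiffs (F.map e.toEquiv.toEmbedding) = (blockDiffs F).map e := by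
  have : (F.map e.toEquiv.toEmbedding ×ˢ F.map e.toEquiv.toEmbedding).filter
      (fun p => p.1 ≠ p.2) = ((F ×ˢ F).filter fun p => p.1 ≠ p.2).map
        (e.toEquiv.toEmbedding.prodMap e.toEquiv.toEmbedding) := by
    rw [← prodMap_map_product, filter_map]
    exact congrArg _ (filter_congr fun p _ => by simp)
  simp only [blockDiffs, this, map_val, Multiset.map_map]
  exact Multiset.map_congr rfl fun p _ => by simp

end BlockDiffs

section QuarterTurns

variable {R : Type*} [CommRing R]

lemma isUnit_one_add_of_mul_self_eq_neg_one {i : R} (hi : i * i = -1) (h2 : IsUnit (2 : R)) :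
    IsUnit (1 + i) :=
  isUnit_of_mul_isUnit_left (y := 1 - i) <| by
    rwa [show (1 + i) * (1 - i) = 2 by linear_combination -hi]

lemma isUnit_one_sub_of_mul_self_eq_neg_one {i : R} (hi : i * i = -1) (h2 : IsUnit (2 : R)) :
    IsUnit (1 - i) :=
  isUnit_of_mul_isUnit_right (x := 1 + i) <| by
    rwa [show (1 + i) * (1 - i) = 2 by linear_combination -hi]

lemma ne_mul_of_mul_self_eq_neg_one {i : R} (hi : i * i = -1) (h2 : IsUnit (2 : R)) {x : R}
    (hx : x ≠ 0) : x ≠ x * i := fun h => hx <|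
  (isUnit_one_sub_of_mul_self_eq_neg_one hi h2).mul_left_eq_zero.1 (by linear_combination h)

lemma mul_one_add_ne_zero_of_mul_self_eq_neg_one {i : R} (hi : i * i = -1) (h2 : IsUnit (2 : R))
    {x : R} (hx : x ≠ 0) : x * (1 + i) ≠ 0 :=
  (isUnit_one_add_of_mul_self_eq_neg_one hi h2).mul_left_eq_zero.not.2 hx

variable (R) in
def nonZeroSubMulAction : SubMulAction Rˣ R where
  carrier := {x | x ≠ 0}
  smul_mem' u x hx := by simpa [Units.smul_def] using hx

lemma mem_nonZeroSubMulAction {x : R} : x ∈ nonZeroSubMulAction R ↔ x ≠ 0 := Iff.rfl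

variable {ι : Rˣ}

lemma val_eq_of_mem_zpowers (hι : (ι : R) * ι = -1) {u : Rˣ} (hu : u ∈ Subgroup.zpowers ι) :
    (u : R) = 1 ∨ (u : R) = ι ∨ (u : R) = -1 ∨ (u : R) = -ι := by
  have h4 : ι ^ 4 = 1 := Units.ext <| by
    simp only [Units.val_pow_eq_pow_val, Units.val_one]
    linear_combination ((ι : R) * ι - 1) * hι
  obtain ⟨k, rfl⟩ := Subgroup.mem_zpowers_iff.1 hu
  rw [zpow_eq_zpow_emod' k h4]
  have h0 : 0 ≤ k % (4 : ℕ) := Int.emod_nonneg k (by norm_num)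
  have h3 : k % (4 : ℕ) < 4 := Int.emod_lt_of_pos k (by norm_num)
  interval_cases k % (4 : ℕ)
  all_goals simp [zpow_ofNat, pow_succ, hι]

lemma orderOf_eq_four [Nontrivial R] (hι : (ι : R) * ι = -1) (h2 : IsUnit (2 : R)) :
    orderOf ι = 4 := by
  have hne : (-1 : R) ≠ 1 := fun h => h2.ne_zero (by linear_combination -h)
  refine orderOf_eq_prime_pow (p := 2) (n := 1) ?_ ?_
  · intro h
    apply hne
    rw [← hι, ← Units.val_mul, ← sq, ← pow_one 2, h, Units.val_one]
  · apply Units.ext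
    simp only [Units.val_pow_eq_pow_val, Units.val_one]
    linear_combination ((ι : R) * ι - 1) * hι

lemma stabilizer_zpowers_eq_bot (hι : (ι : R) * ι = -1) (h2 : IsUnit (2 : R))
    (x : nonZeroSubMulAction R) : MulAction.stabilizer (Subgroup.zpowers ι) x = ⊥ := by
  ext ⟨u, hu⟩
  simp only [MulAction.mem_stabilizer_iff, Subgroup.mem_bot, Subgroup.mk_eq_one]
  refine ⟨fun hux => ?_, fun h => by simp [h]⟩
  have hux : (x : R) * (u - 1) = 0 := by
    have := congrArg Subtype.val hux
    simp only [SubMulAction.val_smul, Subgroup.mk_smul, Units.smul_def] at this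
    linear_combination this
  have hx : (x : R) ≠ 0 := x.2
  rcases val_eq_of_mem_zpowers hι hu with h | h | h | h
  · exact Units.ext h
  all_goals exfalso; apply hx
  · refine (isUnit_one_sub_of_mul_self_eq_neg_one hι h2).neg.mul_left_eq_zero.1 ?_
    rw [← hux, h]; ring
  · refine h2.neg.mul_left_eq_zero.1 ?_
    rw [← hux, h]; ring
  · refine (isUnit_one_add_of_mul_self_eq_neg_one hι h2).neg.mul_left_eq_zero.1 ?_
    rw [← hux, h]; ring

variable (ι) in
abbrev QuarterTurnOrbits : Type _ :=
  MulAction.orbitRel.Quotient (Subgroup.zpowers ι) (nonZeroSubMulAction R)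

lemma exists_mem_zpowers_eq_mul_out (z : nonZeroSubMulAction R) :
    ∃ u ∈ Subgroup.zpowers ι, (z : R) = u * ((⟦z⟧ : QuarterTurnOrbits ι).out : R) := by
  obtain ⟨⟨u, hu⟩, hz⟩ := Quotient.mk_out (s := MulAction.orbitRel (Subgroup.zpowers ι) _) z
  refine ⟨u⁻¹, inv_mem hu, ?_⟩
  rw [← hz]
  simp [Units.smul_def]

lemma card_nonZeroSubMulAction [Nontrivial R] (hι : (ι : R) * ι = -1) (h2 : IsUnit (2 : R)) :
    Nat.card (nonZeroSubMulAction R) = Nat.card (QuarterTurnOrbits ι) * 4 := by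
  rw [Nat.card_congr (MulAction.selfEquivOrbitsQuotientProd (stabilizer_zpowers_eq_bot hι h2)),
    Nat.card_prod, Nat.card_zpowers, orderOf_eq_four hι h2]

end QuarterTurns

section BaseBlock

variable {R : Type*} [CommRing R] [DecidableEq R]

def baseBlock (i x : R) : Finset (R × ZMod 3) := {(x, 0), (x * i, 0), (x * (1 + i), 1), (0, 1)}

variable {i : R}

lemma card_baseBlock (hi : i * i = -1) (h2 : IsUnit (2 : R)) {x : R} (hx : x ≠ 0) :
    #(baseBlock i x) = 4 := by
  have h01 : (0 : ZMod 3) ≠ 1 := by decide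
  rw [baseBlock, card_insert_of_notMem (by simp [ne_mul_of_mul_self_eq_neg_one hi h2 hx, h01]),
    card_insert_of_notMem (by simp [h01]),
    card_pair (by simp [mul_one_add_ne_zero_of_mul_self_eq_neg_one hi h2 hx])]

lemma mem_blockDiffs_baseBlock_of_eq_one_or_eq (hi : i * i = -1) (h2 : IsUnit (2 : R))
    {x u : R} (hx : x ≠ 0) (hu : u = 1 ∨ u = i) :
    (u * x * (1 - i), 0) ∈ blockDiffs (baseBlock i x) ∧
      (u * x, 1) ∈ blockDiffs (baseBlock i x) ∧ (u * x, -1) ∈ blockDiffs (baseBlock i x) := by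
  have h01 : (0 : ZMod 3) ≠ 1 := by decide
  have mem₁ : (x, 0) ∈ baseBlock i x := by simp [baseBlock]
  have memᵢ : (x * i, 0) ∈ baseBlock i x := by simp [baseBlock]
  have mem₁ᵢ : (x * (1 + i), 1) ∈ baseBlock i x := by simp [baseBlock]
  have mem₀ : (0, 1) ∈ baseBlock i x := by simp [baseBlock]
  rcases hu with hu | hu <;> subst u <;> refine ⟨?_, ?_, ?_⟩
  · convert sub_mem_blockDiffs mem₁ memᵢ
      (by simp [ne_mul_of_mul_self_eq_neg_one hi h2 hx]) using 1
    ext <;> simp; ring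
  · convert sub_mem_blockDiffs mem₁ᵢ memᵢ (by simp [h01.symm]) using 1
    ext <;> simp; ring
  · convert sub_mem_blockDiffs mem₁ mem₀ (by simp [hx]) using 1
    ext <;> simp
  · convert sub_mem_blockDiffs mem₁ᵢ mem₀
      (by simp [mul_one_add_ne_zero_of_mul_self_eq_neg_one hi h2 hx]) using 1
    ext <;> simp; linear_combination -x * hi
  · convert sub_mem_blockDiffs mem₁ᵢ mem₁ (by simp [h01.symm]) using 1
    ext <;> simp; ring
  · convert sub_mem_blockDiffs memᵢ mem₀ (by simp [h01]) using 1
    ext <;> simp; ring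

lemma mem_blockDiffs_baseBlock (hi : i * i = -1) (h2 : IsUnit (2 : R)) {x u : R} (hx : x ≠ 0)
    (hu : u = 1 ∨ u = i ∨ u = -1 ∨ u = -i) :
    (u * x * (1 - i), 0) ∈ blockDiffs (baseBlock i x) ∧
      (u * x, 1) ∈ blockDiffs (baseBlock i x) ∧ (u * x, -1) ∈ blockDiffs (baseBlock i x) := by
  rcases hu with hu | hu | hu | hu
  · exact mem_blockDiffs_baseBlock_of_eq_one_or_eq hi h2 hx (.inl hu)
  · exact mem_blockDiffs_baseBlock_of_eq_one_or_eq hi h2 hx (.inr hu)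
  all_goals
    obtain ⟨h0, h1, h1'⟩ := mem_blockDiffs_baseBlock_of_eq_one_or_eq hi h2 hx
      (u := -u) (by rw [hu, neg_neg]; simp)
    refine ⟨?_, ?_, ?_⟩
    · simpa using neg_mem_blockDiffs h0
    · simpa using neg_mem_blockDiffs h1'
    · simpa using neg_mem_blockDiffs h1

end BaseBlock

section QuarterTurnFamily

variable {R : Type*} [CommRing R] [DecidableEq R] {ι : Rˣ} [Fintype (QuarterTurnOrbits ι)]

variable (ι) in
noncomputable def quarterTurnFamily : Multiset (Finset (R × ZMod 3)) :=
  univ.val.map fun q : QuarterTurnOrbits ι => baseBlock (ι : R) (q.out : R)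

lemma card_of_mem_quarterTurnFamily (hι : (ι : R) * ι = -1) (h2 : IsUnit (2 : R)) :
    ∀ F ∈ quarterTurnFamily ι, #F = 4 := by
  simp only [quarterTurnFamily, Multiset.mem_map, mem_val, mem_univ, true_and,
    forall_exists_index, forall_apply_eq_imp_iff]
  exact fun q => card_baseBlock hι h2 q.out.2

lemma card_bind_blockDiffs_quarterTurnFamily [Fintype R] [Nontrivial R] (hι : (ι : R) * ι = -1)
    (h2 : IsUnit (2 : R)) :
    Multiset.card ((quarterTurnFamily ι).bind blockDiffs) =
      #(univ.filter fun w : R × ZMod 3 => w.1 ≠ 0) := by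
  classical
  have h12 (q : QuarterTurnOrbits ι) :
      Multiset.card (blockDiffs (baseBlock (ι : R) (q.out : R))) = 12 := by
    rw [card_blockDiffs, card_baseBlock hι h2 q.out.2]
  have hprod : (univ.filter fun w : R × ZMod 3 => w.1 ≠ 0) = univ.filter (· ≠ 0) ×ˢ univ := by
    ext; simp
  have hcardX : #(univ.filter fun x : R => x ≠ 0) = Nat.card (nonZeroSubMulAction R) := by
    simp [Nat.card_eq_fintype_card, Fintype.card_subtype, mem_nonZeroSubMulAction]
  simp only [quarterTurnFamily, Multiset.bind_map, Multiset.card_bind, Function.comp_def, h12,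
    Multiset.map_const', Multiset.sum_replicate, card_val, card_univ, smul_eq_mul]
  rw [hprod, card_product, hcardX, card_nonZeroSubMulAction hι h2, card_univ, ZMod.card,
    Nat.card_eq_fintype_card]
  omega

lemma mem_bind_blockDiffs_quarterTurnFamily (hι : (ι : R) * ι = -1) (h2 : IsUnit (2 : R))
    (z : nonZeroSubMulAction R) :
    ((z : R) * (1 - ι), (0 : ZMod 3)) ∈ (quarterTurnFamily ι).bind blockDiffs ∧
      ((z : R), (1 : ZMod 3)) ∈ (quarterTurnFamily ι).bind blockDiffs ∧
      ((z : R), (-1 : ZMod 3)) ∈ (quarterTurnFamily ι).bind blockDiffs := by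
  obtain ⟨u, hu, hz⟩ := exists_mem_zpowers_eq_mul_out z
  obtain ⟨h0, h1, h1'⟩ := mem_blockDiffs_baseBlock hι h2 (⟦z⟧ : QuarterTurnOrbits ι).out.2
    (val_eq_of_mem_zpowers hι hu)
  simp only [quarterTurnFamily, Multiset.bind_map, Multiset.mem_bind, mem_val, mem_univ, true_and]
  rw [hz]
  exact ⟨⟨_, h0⟩, ⟨_, h1⟩, ⟨_, h1'⟩⟩

theorem bind_blockDiffs_quarterTurnFamily [Fintype R] [Nontrivial R] (hι : (ι : R) * ι = -1)
    (h2 : IsUnit (2 : R)) :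
    (quarterTurnFamily ι).bind blockDiffs = (univ.filter fun w : R × ZMod 3 => w.1 ≠ 0).val := by
  refine (Multiset.eq_of_le_of_card_le ((Multiset.le_iff_subset (nodup _)).2 ?_)
    (card_bind_blockDiffs_quarterTurnFamily hι h2).le).symm
  rintro ⟨y, c⟩ hy
  have hy0 : y ≠ 0 := by simpa using hy
  rcases (by decide : ∀ c : ZMod 3, c = 0 ∨ c = 1 ∨ c = -1) c with rfl | rfl | rfl
  · obtain ⟨v, hv⟩ := (isUnit_one_sub_of_mul_self_eq_neg_one hι h2).exists_right_inv
    have hyv : y * v ≠ 0 := fun h => hy0 (by linear_combination (1 - (ι : R)) * h - y * hv)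
    have h := (mem_bind_blockDiffs_quarterTurnFamily hι h2 ⟨y * v, hyv⟩).1
    rwa [mul_assoc, mul_comm v, hv, mul_one] at h
  · exact (mem_bind_blockDiffs_quarterTurnFamily hι h2 ⟨y, hy0⟩).2.1
  · exact (mem_bind_blockDiffs_quarterTurnFamily hι h2 ⟨y, hy0⟩).2.2

end QuarterTurnFamily

theorem exists_bind_blockDiffs_eq_fst_ne_zero {R : Type*} [CommRing R] [Fintype R]
    [DecidableEq R] {i : R} (hi : i * i = -1) (h2 : IsUnit (2 : R)) :
    ∃ 𝓕 : Multiset (Finset (R × ZMod 3)), (∀ F ∈ 𝓕, #F = 4) ∧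
      𝓕.bind blockDiffs = (univ.filter fun w : R × ZMod 3 => w.1 ≠ 0).val := by
  rcases subsingleton_or_nontrivial R with hR | hR
  · exact ⟨0, by simp, by simp [Subsingleton.elim _ (0 : R)]⟩
  let ι : Rˣ := ⟨i, -i, by linear_combination -hi, by linear_combination -hi⟩
  have := Fintype.ofFinite (QuarterTurnOrbits ι)
  exact ⟨quarterTurnFamily ι, card_of_mem_quarterTurnFamily hi h2,
    bind_blockDiffs_quarterTurnFamily hi h2⟩

section SqrtNegOne

lemma exists_sq_add_one_dvd_pow_succ {p : ℕ} (hp : p.Prime) (hp2 : p ≠ 2) {k : ℕ}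
    (hk : k ≠ 0) {a : ℤ} (ha : (p : ℤ) ^ k ∣ a ^ 2 + 1) :
    ∃ b : ℤ, (p : ℤ) ^ (k + 1) ∣ b ^ 2 + 1 := by
  obtain ⟨m, hm⟩ := ha
  have hpZ : Prime (p : ℤ) := Nat.prime_iff_prime_int.mp hp
  have hcop : IsCoprime (p : ℤ) (2 * a) := by
    rw [Prime.coprime_iff_not_dvd hpZ]
    intro h
    rcases hpZ.dvd_or_dvd h with h | h
    · exact hp2 ((Nat.prime_dvd_prime_iff_eq hp Nat.prime_two).1 (by exact_mod_cast h))
    · have hsq : (p : ℤ) ∣ a ^ 2 + 1 := (dvd_pow_self _ hk).trans ⟨m, hm⟩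
      exact hpZ.not_dvd_one ((dvd_add_right (dvd_pow h two_ne_zero)).1 hsq)
  obtain ⟨s, t, hst⟩ := hcop
  obtain ⟨j, rfl⟩ : ∃ j, k = j + 1 := ⟨k - 1, by omega⟩
  -- Newton step `a ↦ a - (a² + 1) t`, with `t` an inverse of `2 a` modulo `p`.
  exact ⟨a - m * t * p ^ (j + 1), m * s + m ^ 2 * t ^ 2 * p ^ j, by
    linear_combination hm - (p : ℤ) ^ (j + 1) * m * hst⟩

lemma exists_sq_add_one_dvd_prime_pow {p : ℕ} (hp : p.Prime) (hp4 : p % 4 = 1) (k : ℕ) :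
    ∃ a : ℤ, (p : ℤ) ^ k ∣ a ^ 2 + 1 := by
  induction k with
  | zero => exact ⟨0, by simp⟩
  | succ k ih =>
    rcases eq_or_ne k 0 with rfl | hk
    · have := Fact.mk hp
      obtain ⟨y, hy⟩ := ZMod.exists_sq_eq_neg_one_iff.2 (by omega : p % 4 ≠ 3)
      refine ⟨y.val, ?_⟩
      rw [pow_one, ← ZMod.intCast_zmod_eq_zero_iff_dvd]
      push_cast
      rw [ZMod.natCast_zmod_val]
      linear_combination -hy
    · obtain ⟨a, ha⟩ := ih
      exact exists_sq_add_one_dvd_pow_succ hp (by omega) hk ha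

lemma ZMod.isSquare_neg_one_of_forall_prime_dvd {n : ℕ}
    (hn : ∀ p : ℕ, p.Prime → p ∣ n → p % 4 = 1) : IsSquare (-1 : ZMod n) := by
  induction n using Nat.recOnPosPrimePosCoprime with
  | zero => exact absurd (hn 2 Nat.prime_two (dvd_zero 2)) (by norm_num)
  | one => exact ⟨0, Subsingleton.elim _ _⟩
  | prime_pow p k hp hk =>
    obtain ⟨a, ha⟩ := exists_sq_add_one_dvd_prime_pow hp (hn p hp (dvd_pow_self p hk.ne')) k
    have h0 := (ZMod.intCast_zmod_eq_zero_iff_dvd (a ^ 2 + 1) (p ^ k)).2 (by exact_mod_cast ha)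
    push_cast at h0
    exact ⟨a, by linear_combination -h0⟩
  | coprime p q _ _ hpq hP hQ =>
    exact ZMod.isSquare_neg_one_mul hpq (hP fun r hr hd => hn r hr (hd.mul_right q))
      (hQ fun r hr hd => hn r hr (hd.mul_left p))

end SqrtNegOne

lemma isCDF_map_of_bind_blockDiffs_eq {A : Type*} [AddGroup A] [DecidableEq A] [Fintype A]
    {g h k : ℕ} (e : A ≃+ ZMod (g * h)) {𝓕 : Multiset (Finset A)}
    (hk : ∀ F ∈ 𝓕, #F = k)
    (hdiff : 𝓕.bind blockDiffs =
      (univ.filter fun a => e a ∉ AddSubgroup.zmultiples (g : ZMod (g * h))).val) :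
    IsCDF g h k (𝓕.map (map e.toEquiv.toEmbedding)) := by
  have hcount (x : ZMod (g * h)) :
      ((𝓕.map (map e.toEquiv.toEmbedding)).bind blockDiffs).count x =
        if x ∈ AddSubgroup.zmultiples (g : ZMod (g * h)) then 0 else 1 := by
    rw [Multiset.bind_map, ← e.apply_symm_apply x]
    simp only [blockDiffs_map, ← Multiset.map_bind, Multiset.count_map_eq_count' _ _ e.injective,
      hdiff, Multiset.count_eq_of_nodup (nodup _), mem_val, mem_filter, mem_univ, true_and]
    split_ifs <;> simp_all
  refine ⟨?_, fun x hx => (hcount x).trans (if_pos hx),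
    fun x hx => (hcount x).trans (if_neg hx)⟩
  simp only [Multiset.mem_map, forall_exists_index, and_imp, forall_apply_eq_imp_iff₂, card_map]
  exact hk

lemma ZMod.mem_zmultiples_iff_chineseRemainder_fst_eq_zero {m n : ℕ} (h : m.Coprime n)
    (y : ZMod (m * n)) :
    y ∈ AddSubgroup.zmultiples (m : ZMod (m * n)) ↔ (ZMod.chineseRemainder h y).1 = 0 := by
  obtain ⟨k, rfl⟩ := ZMod.intCast_surjective y
  rw [map_intCast, Prod.fst_intCast, AddSubgroup.mem_zmultiples_iff]
  constructor
  · rintro ⟨j, hj⟩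
    simpa using congrArg (ZMod.castHom (dvd_mul_right m n) (ZMod m)) hj.symm
  · intro hk
    obtain ⟨j, rfl⟩ := (ZMod.intCast_zmod_eq_zero_iff_dvd k m).1 hk
    exact ⟨j, by push_cast; rw [zsmul_eq_mul]; ring⟩

theorem stmt_6_general (g : ℕ) (hp : ∀ p : ℕ, p.Prime → p ∣ g → p % 4 = 1) :
    ∃ 𝓕 : Multiset (Finset (ZMod (g * 3))), IsCDF g 3 4 𝓕 := by
  have hodd : ¬ 2 ∣ g := fun h => by simpa using hp 2 Nat.prime_two h
  have : NeZero g := ⟨by rintro rfl; exact hodd (dvd_zero 2)⟩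
  have hco : g.Coprime 3 := ((Nat.Prime.coprime_iff_not_dvd Nat.prime_three).2
    fun h => by simpa using hp 3 Nat.prime_three h).symm
  have h2 : IsUnit (2 : ZMod g) := by simpa using ZMod.isUnit_prime_of_not_dvd Nat.prime_two hodd
  obtain ⟨i, hi⟩ := ZMod.isSquare_neg_one_of_forall_prime_dvd hp
  obtain ⟨𝓕, hcard, hdiff⟩ := exists_bind_blockDiffs_eq_fst_ne_zero hi.symm h2
  refine ⟨_, isCDF_map_of_bind_blockDiffs_eq (ZMod.chineseRemainder hco).symm.toAddEquiv
    hcard ?_⟩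
  rw [hdiff]
  congr 2
  ext a
  simp [ZMod.mem_zmultiples_iff_chineseRemainder_fst_eq_zero hco]

/-- A `(3g,3,4,1)`-CDF exists for every positive integer `g` all of whose
prime factors are congruent to `1` modulo `4`. -/
theorem stmt_6 (g : ℕ) (hg : 0 < g) (hp : ∀ p : ℕ, p.Prime → p ∣ g → p % 4 = 1) :
    ∃ 𝓕 : Multiset (Finset (ZMod (g * 3))), IsCDF g 3 4 𝓕 :=
  stmt_6_general g hp
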